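/- Let R be a tree convex constraint network. If R is strongly relationally 2-consistent (strongly relationally path consistent), then R is globally consistent. -/

import Mathlib

/-!
Fix a consistent instantiation `f` of `Y` and a new variable `x`. The extension sets of `f`
to `x` along the relevant constraints are nonempty (relational 1-consistency), pairwise
intersecting (relational 2-consistency) and, read in the tree `T` of the tree convexity
hypothesis, path convex. Path convex sets of a tree have the Helly property: this reduces to
three sets, where a common point is the median of three pairwise intersection points. A value
common to all these extension sets extends `f` consistently, so `R` is `k`-consistent for
every `k`.
-/

/-- A constraint: a nonempty scope of variables and a set of allowed tuples
(total assignments whose restriction to the scope determines membership). -/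
structure Constraint (V : Type) (α : Type) where
  scope : Finset V
  scope_nonempty : scope.Nonempty
  allowed : Set (V → α)
  allowed_ext : ∀ f g : V → α, (∀ v ∈ scope, f v = g v) → f ∈ allowed → g ∈ allowed

/-- A constraint network: a finite nonempty domain for each variable and a finite
set of constraints, no two of which have the same scope. -/
structure Network (V : Type) (α : Type) [Fintype V] [DecidableEq V] where
  dom : V → Finset α
  dom_nonempty : ∀ v, (dom v).Nonempty
  cons : Set (Constraint V α)
  cons_finite : cons.Finite
  scope_inj : ∀ c ∈ cons, ∀ c' ∈ cons, c.scope = c'.scope → c = c'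

namespace Network

variable {V α : Type} [Fintype V] [DecidableEq V]

/-- `f` is an instantiation of the variables `Y`: each variable of `Y` gets a value
from its domain. -/
def Inst (R : Network V α) (Y : Set V) (f : V → α) : Prop :=
  ∀ v ∈ Y, f v ∈ R.dom v

/-- `f` is a consistent instantiation of the variables `Y`: it is an instantiation of
`Y` satisfying every constraint whose scope is contained in `Y`. -/
def ConsistentOn (R : Network V α) (Y : Set V) (f : V → α) : Prop :=
  R.Inst Y f ∧ ∀ c ∈ R.cons, (c.scope : Set V) ⊆ Y → f ∈ c.allowed

/-- `R` is `k`-consistent: every consistent instantiation of any `k - 1` distinct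
variables extends consistently to any further variable. -/
def KConsistent (R : Network V α) (k : ℕ) : Prop :=
  ∀ (Y : Finset V) (f : V → α), Y.card + 1 = k → R.ConsistentOn ↑Y f →
    ∀ x ∉ Y, ∃ u ∈ R.dom x,
      R.ConsistentOn ↑(insert x Y) (Function.update f x u)

/-- `R` is strongly `k`-consistent: `j`-consistent for every `j ≤ k`. -/
def StronglyKConsistent (R : Network V α) (k : ℕ) : Prop :=
  ∀ j ≤ k, R.KConsistent j

/-- `R` is globally consistent: strongly `n`-consistent, `n` the number of variables. -/
def GloballyConsistent (R : Network V α) : Prop :=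
  R.StronglyKConsistent (Fintype.card V)

/-- The extension set of an instantiation `f` (of `c.scope − {x}`) to `x` with
respect to the constraint `c`: the values `b` of the domain of `x` such that the
extended instantiation satisfies `c`. -/
def extSet (R : Network V α) (c : Constraint V α) (x : V) (f : V → α) : Set α :=
  {b | b ∈ R.dom x ∧ Function.update f x b ∈ c.allowed}

/-- `c` is a relevant constraint on `x` with respect to `Y`: its scope contains `x`
and its other variables all belong to `Y`. -/
def Relevant (R : Network V α) (c : Constraint V α) (x : V) (Y : Set V) : Prop :=
  c ∈ R.cons ∧ x ∈ c.scope ∧ (↑(c.scope.erase x) : Set V) ⊆ Y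

/-- `c` is properly `m`-tight with respect to `x`: every extension set to `x` has at
most `m` elements. -/
def ProperlyTightWrt (R : Network V α) (c : Constraint V α) (x : V) (m : ℕ) : Prop :=
  ∀ f : V → α, R.Inst ↑(c.scope.erase x) f → (R.extSet c x f).ncard ≤ m

/-- `c` is properly `m`-tight: properly `m`-tight with respect to each of its
variables. -/
def ProperlyTight (R : Network V α) (c : Constraint V α) (m : ℕ) : Prop :=
  ∀ x ∈ c.scope, R.ProperlyTightWrt c x m

/-- `R` (with `n` variables) is weakly `m`-tight at level `k`: for every set `Y` of
`l` variables, `k ≤ l < n`, and every variable `x ∉ Y`, some relevant constraint on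
`x` with respect to `Y` is properly `m`-tight. -/
def WeaklyTight (R : Network V α) (m k : ℕ) : Prop :=
  ∀ Y : Finset V, k ≤ Y.card → Y.card < Fintype.card V →
    ∀ x ∉ Y, ∃ c, R.Relevant c x ↑Y ∧ R.ProperlyTight c m

/-- `R` is tree convex: there is a tree on the union of all the domains under which
every nonempty extension set of every constraint is tree convex (induces a connected
subgraph). -/
def TreeConvexNet (R : Network V α) : Prop :=
  ∃ T : SimpleGraph {a : α // a ∈ ⋃ v, (R.dom v : Set α)},
    T.IsTree ∧
      ∀ c ∈ R.cons, ∀ x ∈ c.scope, ∀ f : V → α,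
        R.Inst ↑(c.scope.erase x) f → (R.extSet c x f).Nonempty →
          (T.induce (Subtype.val ⁻¹' R.extSet c x f)).Connected

/-- `R` is relationally `m`-consistent: for any `m` distinct constraints, any common
variable `x` of their scopes, and any consistent instantiation of the union of their
scopes minus `x`, some value of the domain of `x` extends it to satisfy all `m`
constraints. -/
def RelConsistent (R : Network V α) (m : ℕ) : Prop :=
  ∀ cs : Fin m → Constraint V α, Function.Injective cs →
    (∀ i, cs i ∈ R.cons) → ∀ x : V, (∀ i, x ∈ (cs i).scope) →
      ∀ f : V → α, R.ConsistentOn ((⋃ i, ((cs i).scope : Set V)) \ {x}) f →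
        ∃ u ∈ R.dom x, ∀ i, Function.update f x u ∈ (cs i).allowed

/-- `R` is strongly relationally `m`-consistent. -/
def StronglyRelConsistent (R : Network V α) (m : ℕ) : Prop :=
  ∀ j ≤ m, R.RelConsistent j

end Network

namespace SimpleGraph

variable {W : Type*} {G : SimpleGraph W}

def IsPathConvex (G : SimpleGraph W) (A : Set W) : Prop :=
  ∀ ⦃a⦄, a ∈ A → ∀ ⦃b⦄, b ∈ A → ∀ p : G.Walk a b, p.IsPath → ∀ v ∈ p.support, v ∈ A

lemma IsPathConvex.inter {A B : Set W} (hA : G.IsPathConvex A) (hB : G.IsPathConvex B) :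
    G.IsPathConvex (A ∩ B) := fun _ ha _ hb p hp v hv =>
  ⟨hA ha.1 hb.1 p hp v hv, hB ha.2 hb.2 p hp v hv⟩

namespace Walk

lemma exists_walk_to_first_mem {a b : W} (p : G.Walk a b) {S : Set W} (hb : b ∈ S) :
    ∃ m ∈ S, ∃ w : G.Walk a m, w.support ⊆ p.support ∧ ∀ v ∈ w.support, v ∈ S → v = m := by
  induction p with
  | nil => exact ⟨_, hb, nil, by simp, by simp⟩
  | @cons u _ _ h _ ih =>
    by_cases hu : u ∈ S
    · exact ⟨u, hu, nil, by simp, by simp⟩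
    · obtain ⟨m, hm, w, hwp, hwS⟩ := ih hb
      refine ⟨m, hm, cons h w, ?_, ?_⟩
      · simpa only [support_cons] using List.cons_subset_cons u hwp
      · simp only [support_cons, List.mem_cons, forall_eq_or_imp]
        exact ⟨fun h => absurd h hu, hwS⟩

lemma IsPath.append_of_forall_mem_support_eq {a m c : W} {w : G.Walk a m} {s : G.Walk m c}
    (hw : w.IsPath) (hs : s.IsPath) (hws : ∀ v ∈ w.support, v ∈ s.support → v = m) :
    (w.append s).IsPath := by
  have hm : m ∉ s.support.tail := by
    have hnodup := hs.support_nodup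
    rw [← s.cons_tail_support] at hnodup
    exact (List.nodup_cons.1 hnodup).1
  rw [isPath_def, support_append]
  exact hw.support_nodup.append hs.support_nodup.tail fun v hvw hvs =>
    hm (hws v hvw (List.mem_of_mem_tail hvs) ▸ hvs)

end Walk

lemma IsAcyclic.eq_of_isPath (hG : G.IsAcyclic) {a b : W} {p q : G.Walk a b}
    (hp : p.IsPath) (hq : q.IsPath) : p = q :=
  congrArg Subtype.val ((hG.subsingleton_path a b).elim ⟨p, hp⟩ ⟨q, hq⟩)

lemma IsAcyclic.isPathConvex_of_induce_connected (hG : G.IsAcyclic) {A : Set W}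
    (h : (G.induce A).Connected) : G.IsPathConvex A := by
  classical
  intro a ha b hb p hp v hv
  obtain ⟨w⟩ := h.preconnected ⟨a, ha⟩ ⟨b, hb⟩
  have hwA : ∀ u ∈ (w.map (Embedding.induce A).toHom).support, u ∈ A := by
    simp only [Walk.support_map, List.mem_map]
    rintro _ ⟨⟨u, hu⟩, -, rfl⟩
    exact hu
  rw [hG.eq_of_isPath hp (w.map (Embedding.induce A).toHom).bypass_isPath] at hv
  exact hwA v (Walk.support_bypass_subset_support _ hv)

/-- The path from `a` to `c` passes through the first vertex of `p` on `r`. -/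
lemma IsAcyclic.exists_mem_support_of_isPath (hG : G.IsAcyclic) {a b c : W} (p : G.Walk a b)
    {q : G.Walk a c} {r : G.Walk b c} (hq : q.IsPath) (hr : r.IsPath) :
    ∃ m ∈ p.support, m ∈ q.support ∧ m ∈ r.support := by
  classical
  obtain ⟨m, hmr, w, hwp, hwr⟩ :=
    p.exists_walk_to_first_mem (S := {v | v ∈ r.support}) r.start_mem_support
  have hpath : (w.bypass.append (r.dropUntil m hmr)).IsPath :=
    w.bypass_isPath.append_of_forall_mem_support_eq (hr.dropUntil hmr) fun v hvw hvr =>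
      hwr v (w.support_bypass_subset_support hvw) (r.support_dropUntil_subset_support hmr hvr)
  refine ⟨m, hwp w.end_mem_support, ?_, hmr⟩
  rw [hG.eq_of_isPath hq hpath]
  exact (Walk.mem_support_append_iff _ _).2 (Or.inl w.bypass.end_mem_support)

lemma IsTree.inter_inter_nonempty (hG : G.IsTree) {A B C : Set W} (hA : G.IsPathConvex A)
    (hB : G.IsPathConvex B) (hC : G.IsPathConvex C) (hAB : (A ∩ B).Nonempty)
    (hAC : (A ∩ C).Nonempty) (hBC : (B ∩ C).Nonempty) : (A ∩ B ∩ C).Nonempty := by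
  obtain ⟨a, haA, haB⟩ := hAB
  obtain ⟨b, hbA, hbC⟩ := hAC
  obtain ⟨c, hcB, hcC⟩ := hBC
  obtain ⟨p, hp, -⟩ := hG.existsUnique_path a b
  obtain ⟨q, hq, -⟩ := hG.existsUnique_path a c
  obtain ⟨r, hr, -⟩ := hG.existsUnique_path b c
  obtain ⟨m, hmp, hmq, hmr⟩ := hG.isAcyclic.exists_mem_support_of_isPath p hq hr
  exact ⟨m, ⟨hA haA hbA p hp m hmp, hB haB hcB q hq m hmq⟩, hC hbC hcC r hr m hmr⟩

theorem IsTree.helly {ι : Type*} (hG : G.IsTree) {F : ι → Set W} {s : Finset ι}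
    (hs : s.Nonempty) (hconv : ∀ i ∈ s, G.IsPathConvex (F i))
    (hpair : ∀ i ∈ s, ∀ j ∈ s, (F i ∩ F j).Nonempty) : (⋂ i ∈ s, F i).Nonempty := by
  induction hs using Finset.Nonempty.cons_induction generalizing F with
  | singleton i => simpa using hpair i (by simp) i (by simp)
  | cons i s hi hs ih =>
    have hconv' : ∀ j ∈ s, G.IsPathConvex (F j ∩ F i) := fun j hj =>
      (hconv j (by simp [hj])).inter (hconv i (by simp))
    have hpair' : ∀ j ∈ s, ∀ k ∈ s, (F j ∩ F i ∩ (F k ∩ F i)).Nonempty := by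
      intro j hj k hk
      have hj' : j ∈ Finset.cons i s hi := by simp [hj]
      have hk' : k ∈ Finset.cons i s hi := by simp [hk]
      have hi' : i ∈ Finset.cons i s hi := by simp
      obtain ⟨x, ⟨hxj, hxk⟩, hxi⟩ := hG.inter_inter_nonempty (hconv j hj') (hconv k hk')
        (hconv i hi') (hpair j hj' k hk') (hpair j hj' i hi') (hpair k hk' i hi')
      exact ⟨x, ⟨hxj, hxi⟩, hxk, hxi⟩
    obtain ⟨x, hx⟩ := ih hconv' hpair'
    simp only [Set.mem_iInter] at hx
    obtain ⟨j, hj⟩ := hs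
    refine ⟨x, Set.mem_iInter₂.2 fun k hk => ?_⟩
    rcases Finset.mem_cons.1 hk with rfl | hk
    · exact (hx j hj).2
    · exact (hx k hk).1

end SimpleGraph

namespace Network

variable {V α : Type} [Fintype V] [DecidableEq V] {R : Network V α}

lemma ConsistentOn.mono {Y Z : Set V} (h : Y ⊆ Z) {f : V → α} (hf : R.ConsistentOn Z f) :
    R.ConsistentOn Y f :=
  ⟨fun v hv => hf.1 v (h hv), fun c hc hs => hf.2 c hc (hs.trans h)⟩

lemma ConsistentOn.update_insert {Y : Set V} {f : V → α} (hf : R.ConsistentOn Y f) {x : V}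
    {u : α} (hu : u ∈ R.dom x)
    (hrel : ∀ c, R.Relevant c x Y → Function.update f x u ∈ c.allowed) :
    R.ConsistentOn (insert x Y) (Function.update f x u) := by
  refine ⟨fun v hv => ?_, fun c hc hs => ?_⟩
  · rcases eq_or_ne v x with rfl | hvx
    · simpa using hu
    · rw [Function.update_of_ne hvx]
      exact hf.1 v (hv.resolve_left hvx)
  · by_cases hxc : x ∈ c.scope
    · refine hrel c ⟨hc, hxc, fun v hv => ?_⟩
      obtain ⟨hvx, hvc⟩ := Finset.mem_erase.1 hv
      exact (hs hvc).resolve_left hvx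
    · have hne : ∀ v ∈ c.scope, v ≠ x := fun v hv => ne_of_mem_of_not_mem hv hxc
      exact c.allowed_ext f _ (fun v hv => (Function.update_of_ne (hne v hv) u f).symm)
        (hf.2 c hc fun v hv => (hs hv).resolve_left (hne v hv))

lemma RelConsistent.exists_forall_mem_extSet {m : ℕ} (h : R.RelConsistent m)
    {cs : Fin m → Constraint V α} (hinj : Function.Injective cs) {x : V} {Y : Set V}
    (hrel : ∀ i, R.Relevant (cs i) x Y) {f : V → α} (hf : R.ConsistentOn Y f) :
    ∃ u, ∀ i, u ∈ R.extSet (cs i) x f := by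
  have hsub : (⋃ i, ((cs i).scope : Set V)) \ {x} ⊆ Y := by
    rintro v ⟨hv, hvx⟩
    obtain ⟨i, hi⟩ := Set.mem_iUnion.1 hv
    exact (hrel i).2.2 (Finset.mem_erase.2 ⟨hvx, hi⟩)
  obtain ⟨u, hu, hall⟩ :=
    h cs hinj (fun i => (hrel i).1) x (fun i => (hrel i).2.1) f (hf.mono hsub)
  exact ⟨u, fun i => ⟨hu, hall i⟩⟩

lemma StronglyRelConsistent.extSet_inter_nonempty (h : R.StronglyRelConsistent 2) {x : V}
    {Y : Set V} {c c' : Constraint V α} (hc : R.Relevant c x Y) (hc' : R.Relevant c' x Y)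
    {f : V → α} (hf : R.ConsistentOn Y f) :
    (R.extSet c x f ∩ R.extSet c' x f).Nonempty := by
  obtain rfl | hne := eq_or_ne c c'
  · obtain ⟨u, hu⟩ := (h 1 (by norm_num)).exists_forall_mem_extSet (cs := fun _ => c)
      (fun i j _ => Subsingleton.elim i j) (fun _ => hc) hf
    exact ⟨u, hu 0, hu 0⟩
  · obtain ⟨u, hu⟩ := (h 2 le_rfl).exists_forall_mem_extSet (injective_pair_iff_ne.2 hne)
      (fun i => by fin_cases i <;> assumption) hf
    exact ⟨u, hu 0, hu 1⟩

lemma TreeConvexNet.exists_forall_relevant_mem_extSet (htc : R.TreeConvexNet)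
    (hrc : R.StronglyRelConsistent 2) {Y : Set V} {f : V → α} (hf : R.ConsistentOn Y f)
    (x : V) : ∃ u ∈ R.dom x, ∀ c, R.Relevant c x Y → u ∈ R.extSet c x f := by
  obtain ⟨T, hT, hconv⟩ := htc
  have hfin : {c | R.Relevant c x Y}.Finite := R.cons_finite.subset fun _ hc => hc.1
  rcases hfin.toFinset.eq_empty_or_nonempty with hempty | hne
  · obtain ⟨u, hu⟩ := R.dom_nonempty x
    refine ⟨u, hu, fun c hc => ?_⟩
    simpa [hempty] using hfin.mem_toFinset.2 hc
  · have hpair : ∀ c ∈ hfin.toFinset, ∀ c' ∈ hfin.toFinset,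
        (R.extSet c x f ∩ R.extSet c' x f).Nonempty := fun c hc c' hc' =>
      hrc.extSet_inter_nonempty (hfin.mem_toFinset.1 hc) (hfin.mem_toFinset.1 hc') hf
    obtain ⟨⟨u, _⟩, hu⟩ := hT.helly (F := fun c => Subtype.val ⁻¹' R.extSet c x f) hne
      (fun c hc => by
        obtain ⟨hcR, hxc, hsub⟩ := hfin.mem_toFinset.1 hc
        exact hT.isAcyclic.isPathConvex_of_induce_connected
          (hconv c hcR x hxc f (fun v hv => hf.1 v (hsub hv)) ((hpair c hc c hc).mono
            Set.inter_subset_left)))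
      (fun c hc c' hc' => by
        obtain ⟨u, hu, hu'⟩ := hpair c hc c' hc'
        exact ⟨⟨u, Set.mem_iUnion.2 ⟨x, hu.1⟩⟩, hu, hu'⟩)
    simp only [Set.mem_iInter, Set.mem_preimage] at hu
    obtain ⟨c₀, hc₀⟩ := hne
    exact ⟨u, (hu c₀ hc₀).1, fun c hc => hu c (hfin.mem_toFinset.2 hc)⟩

theorem kConsistent_of_treeConvexNet (htc : R.TreeConvexNet)
    (hrc : R.StronglyRelConsistent 2) (k : ℕ) : R.KConsistent k := by
  intro Y f _ hf x _
  obtain ⟨u, hu, huc⟩ := htc.exists_forall_relevant_mem_extSet hrc hf x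
  refine ⟨u, hu, ?_⟩
  rw [Finset.coe_insert]
  exact hf.update_insert hu fun c hc => (huc c hc).2

end Network

/-- **Tree Convexity (relational consistency version).**  A tree convex constraint
network that is strongly relationally path consistent (strongly relationally
`2`-consistent) is globally consistent. -/
theorem Network.treeConvex_relCons_globallyConsistent
    {V α : Type} [Fintype V] [DecidableEq V] (R : Network V α)
    (htc : R.TreeConvexNet)
    (hrc : R.StronglyRelConsistent 2) :
    R.GloballyConsistent :=
  fun k _ => R.kConsistent_of_treeConvexNet htc hrc k
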